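/- Multipartite parity norm bound (Proposition 2.1): Under the stated setup, the operator norm of B satisfies ‖B‖² ≤ m + ∑_{1 ≤ i < j ≤ m} φ^{(n)}_{ij}. -/

import Mathlib

open scoped BigOperators ComplexOrder

namespace Parity

variable {n : ℕ} {d : Fin n → ℕ}

/-- Kronecker product of `n` matrices, as a matrix over the product index set. -/
def kron (a : ∀ r : Fin n, Matrix (Fin (d r)) (Fin (d r)) ℂ) :
    Matrix (∀ r, Fin (d r)) (∀ r, Fin (d r)) ℂ :=
  fun i j => ∏ r, a r (i r) (j r)

/-- The ℓ²-operator norm of a complex matrix. -/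
noncomputable def opNorm {I : Type*} [Fintype I] [DecidableEq I] (A : Matrix I I ℂ) : ℝ :=
  ‖Matrix.toEuclideanCLM (𝕜 := ℂ) A‖

/-- The defect weight φ⁽ⁿ⁾ᵢⱼ. -/
noncomputable def phi {m : ℕ} (a : ∀ r : Fin n, Fin m → Matrix (Fin (d r)) (Fin (d r)) ℂ)
    (i j : Fin m) : ℝ :=
  (2 : ℝ) ^ ((1 : ℤ) - n) *
    ∑ S ∈ Finset.univ.filter (fun S : Finset (Fin n) => Even S.card),
      (∏ r ∈ S, opNorm (a r i * a r j - a r j * a r i)) *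
        (∏ r ∈ Sᶜ, opNorm (a r i * a r j + a r j * a r i))

/-- A state: positive semidefinite with trace one. -/
def IsState {I : Type*} [Fintype I] (ρ : Matrix I I ℂ) : Prop :=
  ρ.PosSemidef ∧ ρ.trace = 1

/-- The trace norm `Tr √(AᴴA)`. -/
noncomputable def traceNorm {I : Type*} [Fintype I] [DecidableEq I] (A : Matrix I I ℂ) : ℝ :=
  (((Matrix.posSemidef_conjTranspose_mul_self A).1.eigenvectorUnitary : Matrix I I ℂ) *
      Matrix.diagonal ((fun x : ℝ => (x : ℂ)) ∘ (√·) ∘ (Matrix.posSemidef_conjTranspose_mul_self A).1.eigenvalues) *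
      (star (Matrix.posSemidef_conjTranspose_mul_self A).1.eigenvectorUnitary : Matrix I I ℂ)).trace.re

/-- Logarithm of a Hermitian matrix via the functional calculus (junk value otherwise);
an eigenvalue `0` contributes `Real.log 0 = 0`. -/
noncomputable def mlog {I : Type*} [Fintype I] [DecidableEq I] (A : Matrix I I ℂ) :
    Matrix I I ℂ :=
  if hA : A.IsHermitian then
    (hA.eigenvectorUnitary : Matrix I I ℂ) *
      Matrix.diagonal (fun i => (Real.log (hA.eigenvalues i) : ℂ)) *
      (star hA.eigenvectorUnitary : Matrix I I ℂ)
  else 0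

/-- Quantum relative entropy `D(ρ‖σ) = Tr(ρ (log ρ − log σ))` (natural logarithm). -/
noncomputable def relEntropy {I : Type*} [Fintype I] [DecidableEq I] (ρ σ : Matrix I I ℂ) : ℝ :=
  (Matrix.trace (ρ * (mlog ρ - mlog σ))).re

/-- The `r`-th marginal (partial trace over all other factors). -/
noncomputable def marginal (ρ : Matrix (∀ r, Fin (d r)) (∀ r, Fin (d r)) ℂ) (r : Fin n) :
    Matrix (Fin (d r)) (Fin (d r)) ℂ :=
  fun a b => ∑ k : ∀ s, Fin (d s), if k r = a then ρ k (Function.update k r b) else 0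

/-- Total correlation `I_tot(ρ) = D(ρ‖ρ₁ ⊗ ⋯ ⊗ ρₙ)`. -/
noncomputable def Itot (ρ : Matrix (∀ r, Fin (d r)) (∀ r, Fin (d r)) ℂ) : ℝ :=
  relEntropy ρ (kron (fun r => marginal ρ r))

/-- The set of product states. -/
def ProdStates (d : Fin n → ℕ) : Set (Matrix (∀ r, Fin (d r)) (∀ r, Fin (d r)) ℂ) :=
  {σ | ∃ s : ∀ r : Fin n, Matrix (Fin (d r)) (Fin (d r)) ℂ,
    (∀ r, IsState (s r)) ∧ σ = kron s}

/-- The product threshold `Γ_prod(B)`. -/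
noncomputable def Gamma (d : Fin n → ℕ) (B : Matrix (∀ r, Fin (d r)) (∀ r, Fin (d r)) ℂ) : ℝ :=
  sSup {x : ℝ | ∃ σ ∈ ProdStates d, x = (Matrix.trace (σ * B)).re}

/-- The excess `Δ_B(ρ)`. -/
noncomputable def excess (d : Fin n → ℕ) (B ρ : Matrix (∀ r, Fin (d r)) (∀ r, Fin (d r)) ℂ) : ℝ :=
  max ((Matrix.trace (ρ * B)).re - Gamma d B) 0

end Parity

/-!
Because `B` is self-adjoint, `‖B‖² = ‖B²‖`, and `B² = ∑ᵢ Aᵢ² + ∑_{i<j} (AᵢAⱼ + AⱼAᵢ)` with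
`Aᵢ = ⊗ᵣ aᵢ⁽ʳ⁾`, where `‖Aᵢ²‖ ≤ 1` and `AᵢAⱼ + AⱼAᵢ = ⊗ᵣ pᵣ + ⊗ᵣ qᵣ` for `pᵣ = aᵢ⁽ʳ⁾aⱼ⁽ʳ⁾`,
`qᵣ = aⱼ⁽ʳ⁾aᵢ⁽ʳ⁾`. Writing `2pᵣ = sᵣ + cᵣ` and `2qᵣ = sᵣ - cᵣ` with `s` the anticommutator and `c`
the commutator, and expanding both tensor products multilinearly, the terms with an odd number of
commutator factors cancel, so `2ⁿ (⊗ᵣ pᵣ + ⊗ᵣ qᵣ) = 2 ∑_{|S| even} ⊗ᵣ (r ∈ S ? cᵣ : sᵣ)`.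
The operator norm is submultiplicative over tensor products since each factor embeds into the
tensor product by a unital ⋆-homomorphism, and ⋆-homomorphisms of C⋆-algebras are contractive.
-/

open Finset
open scoped Matrix.Norms.L2Operator

theorem Finset.sum_sum_eq_sum_diag_add_sum_lt {ι M : Type*} [Fintype ι] [LinearOrder ι]
    [AddCommMonoid M] (f : ι → ι → M) :
    ∑ i, ∑ j, f i j = ∑ i, f i i + ∑ i, ∑ j ∈ univ.filter (i < ·), (f i j + f j i) := by
  have split_row (i : ι) : ∑ j, f i j = f i i + ∑ j ∈ univ.filter (i < ·), f i j
      + ∑ j ∈ univ.filter (· < i), f i j := by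
    rw [← add_sum_erase _ _ (mem_univ i), add_assoc, ← sum_union]
    · congr 2
      ext j
      simp only [mem_erase, mem_univ, and_true, mem_union, mem_filter, true_and]
      exact ⟨fun h => h.symm.lt_or_gt, fun h => h.elim ne_of_gt ne_of_lt⟩
    · exact disjoint_filter.2 fun j _ h h' => lt_asymm h h'
  have swap : ∑ i, ∑ j ∈ univ.filter (· < i), f i j = ∑ i, ∑ j ∈ univ.filter (i < ·), f j i :=
    sum_comm' fun _ _ => by simp
  simp only [split_row, sum_add_distrib, swap]
  abel

theorem Finset.prod_add_add_prod_sub {ι R : Type*} [Fintype ι] [DecidableEq ι] [CommRing R]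
    (s c : ι → R) :
    ∏ r, (s r + c r) + ∏ r, (s r - c r) =
      2 * ∑ T ∈ univ.filter (fun T : Finset ι => Even T.card), (∏ r ∈ T, c r) * ∏ r ∈ Tᶜ, s r := by
  have hplus : ∏ r, (s r + c r) = ∑ T, (∏ r ∈ T, c r) * ∏ r ∈ Tᶜ, s r := by
    simpa only [add_comm] using Fintype.prod_add c s
  have hminus : ∏ r, (s r - c r) = ∑ T, (-1) ^ T.card * ((∏ r ∈ T, c r) * ∏ r ∈ Tᶜ, s r) := by
    simp only [sub_eq_neg_add, Fintype.prod_add, prod_neg, mul_assoc]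
  rw [hplus, hminus, ← sum_add_distrib, sum_filter, mul_sum]
  refine sum_congr rfl fun T _ => ?_
  rcases T.card.even_or_odd with h | h
  · simp only [h.neg_one_pow, h, if_true]
    ring
  · simp [h.neg_one_pow, Nat.not_even_iff_odd.2 h]

theorem Finset.prod_apply_piecewise {ι M : Type*} {δ : ι → Type*} [Fintype ι]
    [DecidableEq ι] [CommMonoid M] (T : Finset ι) (f g : ∀ i, δ i) (h : ∀ i, δ i → M) :
    ∏ i, h i (T.piecewise f g i) = (∏ i ∈ T, h i (f i)) * ∏ i ∈ Tᶜ, h i (g i) := by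
  rw [← prod_mul_prod_compl T]
  congr 1 <;> refine prod_congr rfl fun i hi => ?_
  · rw [piecewise_eq_of_mem _ _ _ hi]
  · rw [piecewise_eq_of_notMem _ _ _ (mem_compl.1 hi)]

theorem CStarRing.norm_one_le {E : Type*} [NormedRing E] [StarRing E] [CStarRing E] :
    ‖(1 : E)‖ ≤ 1 := by
  have h : ‖(1 : E)‖ = ‖(1 : E)‖ * ‖(1 : E)‖ := by
    simpa using CStarRing.norm_star_mul_self (x := (1 : E))
  nlinarith [norm_nonneg (1 : E)]

theorem norm_sum_sq_le_of_isSelfAdjoint {E ι : Type*} [NonUnitalNormedRing E] [StarRing E]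
    [CStarRing E] [Fintype ι] [LinearOrder ι] {A : ι → E} (hA : ∀ i, IsSelfAdjoint (A i)) :
    ‖∑ i, A i‖ ^ 2 ≤ ∑ i, ‖A i‖ ^ 2 + ∑ i, ∑ j ∈ univ.filter (i < ·), ‖A i * A j + A j * A i‖ := by
  have hB : IsSelfAdjoint (∑ i, A i) := isSelfAdjoint_sum _ fun i _ => hA i
  rw [← hB.norm_mul_self, sum_mul_sum, sum_sum_eq_sum_diag_add_sum_lt]
  refine (norm_add_le _ _).trans (add_le_add ?_ ?_)
  · exact (norm_sum_le _ _).trans_eq (sum_congr rfl fun i _ => (hA i).norm_mul_self)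
  · exact (norm_sum_le _ _).trans (sum_le_sum fun i _ => norm_sum_le _ _)

namespace Parity

open Matrix

variable {n : ℕ} {d : Fin n → ℕ}

theorem kron_mul (a b : ∀ r, Matrix (Fin (d r)) (Fin (d r)) ℂ) :
    kron a * kron b = kron (a * b) := by
  ext i j
  simp only [mul_apply, kron, Pi.mul_apply, ← prod_mul_distrib]
  exact (Fintype.prod_sum fun r k => a r (i r) k * b r k (j r)).symm

theorem kron_one : kron (1 : ∀ r, Matrix (Fin (d r)) (Fin (d r)) ℂ) = 1 := by
  ext i j
  by_cases hij : i = j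
  · subst hij
    simp [kron, one_apply]
  · obtain ⟨r, hr⟩ := Function.ne_iff.1 hij
    simp only [kron, Pi.one_apply, one_apply_ne hij]
    exact prod_eq_zero (mem_univ r) (one_apply_ne hr)

theorem kron_conjTranspose (a : ∀ r, Matrix (Fin (d r)) (Fin (d r)) ℂ) :
    (kron a)ᴴ = kron fun r => (a r)ᴴ := by
  ext i j
  simp [kron, conjTranspose_apply, star_prod]

theorem kron_mulSingle_apply (r : Fin n) (x : Matrix (Fin (d r)) (Fin (d r)) ℂ)
    (i j : ∀ r, Fin (d r)) :
    kron (Pi.mulSingle r x) i j =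
      x (i r) (j r) * ∏ s ∈ univ.erase r, (1 : Matrix (Fin (d s)) (Fin (d s)) ℂ) (i s) (j s) := by
  rw [kron, ← mul_prod_erase _ _ (mem_univ r), Pi.mulSingle_eq_same]
  congr 1
  exact prod_congr rfl fun s hs => by rw [Pi.mulSingle_eq_of_ne (ne_of_mem_erase hs)]

noncomputable def siteEmbedding (r : Fin n) :
    Matrix (Fin (d r)) (Fin (d r)) ℂ →⋆ₐ[ℂ] Matrix (∀ s, Fin (d s)) (∀ s, Fin (d s)) ℂ where
  toFun x := kron (Pi.mulSingle r x)
  map_one' := by rw [Pi.mulSingle_one, kron_one]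
  map_mul' x y := by rw [kron_mul, Pi.mulSingle_mul]
  map_zero' := by ext i j; simp [kron_mulSingle_apply]
  map_add' x y := by ext i j; simp [kron_mulSingle_apply, add_mul]
  commutes' c := by
    ext i j
    simp only [Algebra.algebraMap_eq_smul_one]
    rw [kron_mulSingle_apply, Matrix.smul_apply, Matrix.smul_apply, smul_eq_mul, smul_eq_mul,
      mul_assoc, ← kron_mulSingle_apply, Pi.mulSingle_one, kron_one]
  map_star' x := by
    simp only [star_eq_conjTranspose, kron_conjTranspose]
    congr 1
    funext s
    exact (Pi.apply_mulSingle (fun s (y : Matrix (Fin (d s)) (Fin (d s)) ℂ) => yᴴ)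
      (fun _ => conjTranspose_one) r x s).symm

theorem kron_update_eq_mul_siteEmbedding {a : ∀ r, Matrix (Fin (d r)) (Fin (d r)) ℂ} {r : Fin n}
    (ha : a r = 1) (x : Matrix (Fin (d r)) (Fin (d r)) ℂ) :
    kron (Function.update a r x) = kron a * siteEmbedding r x := by
  change _ = kron a * kron (Pi.mulSingle r x)
  rw [kron_mul]
  congr 1
  funext s
  by_cases hs : s = r
  · subst hs
    simp [ha]
  · simp [hs]

theorem norm_kron_le (a : ∀ r, Matrix (Fin (d r)) (Fin (d r)) ℂ) :
    ‖kron a‖ ≤ ∏ r, ‖a r‖ := by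
  suffices h : ∀ T : Finset (Fin n), ‖kron (T.piecewise a 1)‖ ≤ ∏ r ∈ T, ‖a r‖ by
    simpa using h univ
  intro T
  induction T using Finset.induction_on with
  | empty => simpa [kron_one] using CStarRing.norm_one_le
  | insert r T hr ih =>
    rw [piecewise_insert, kron_update_eq_mul_siteEmbedding (piecewise_eq_of_notMem _ _ _ hr),
      prod_insert hr, mul_comm]
    exact (norm_mul_le _ _).trans (mul_le_mul ih (NonUnitalStarAlgHom.norm_apply_le _ _)
      (norm_nonneg _) (prod_nonneg fun _ _ => norm_nonneg _))

theorem two_pow_smul_kron_add_kron (p q : ∀ r, Matrix (Fin (d r)) (Fin (d r)) ℂ) :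
    (2 : ℂ) ^ n • (kron p + kron q) =
      (2 : ℂ) • ∑ T ∈ univ.filter (fun T : Finset (Fin n) => Even T.card),
        kron (T.piecewise (p - q) (p + q)) := by
  ext i j
  have two_pow_mul_prod (f : Fin n → ℂ) : 2 ^ n * ∏ r, f r = ∏ r, (2 * f r) := by
    rw [prod_mul_distrib, prod_const, card_univ, Fintype.card_fin]
  simp only [Matrix.smul_apply, Matrix.add_apply, Matrix.sum_apply, smul_eq_mul, kron,
    prod_apply_piecewise _ (p - q) (p + q) (fun r M => M (i r) (j r)), mul_add,
    two_pow_mul_prod, ← prod_add_add_prod_sub, Pi.sub_apply, Pi.add_apply, Matrix.sub_apply]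
  congr 1 <;> exact prod_congr rfl fun r _ => by ring

theorem norm_kron_piecewise_le (T : Finset (Fin n))
    (c s : ∀ r, Matrix (Fin (d r)) (Fin (d r)) ℂ) :
    ‖kron (T.piecewise c s)‖ ≤ (∏ r ∈ T, ‖c r‖) * ∏ r ∈ Tᶜ, ‖s r‖ :=
  (norm_kron_le _).trans_eq (prod_apply_piecewise T c s fun _ M => ‖M‖)

theorem norm_kron_add_kron_le (p q : ∀ r, Matrix (Fin (d r)) (Fin (d r)) ℂ) :
    ‖kron p + kron q‖ ≤ 2 ^ (1 - n : ℤ) *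
      ∑ T ∈ univ.filter (fun T : Finset (Fin n) => Even T.card),
        (∏ r ∈ T, ‖p r - q r‖) * ∏ r ∈ Tᶜ, ‖p r + q r‖ := by
  have h := congrArg norm (two_pow_smul_kron_add_kron p q)
  rw [norm_smul, norm_smul, norm_pow, Complex.norm_ofNat] at h
  have hsum := (norm_sum_le _ _).trans (sum_le_sum fun T (_ : T ∈ univ.filter
    (fun T : Finset (Fin n) => Even T.card)) => norm_kron_piecewise_le T (p - q) (p + q))
  rw [zpow_sub₀ two_ne_zero, zpow_one, zpow_natCast, div_mul_eq_mul_div,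
    le_div_iff₀ (by positivity), mul_comm, h]
  exact mul_le_mul_of_nonneg_left hsum zero_le_two

end Parity

open Parity in
theorem multipartite_parity_norm_bound_general
    {n m : ℕ} {d : Fin n → ℕ}
    (a : ∀ r : Fin n, Fin m → Matrix (Fin (d r)) (Fin (d r)) ℂ)
    (ha_sa : ∀ r i, (a r i).IsHermitian)
    (ha_norm : ∀ r i, opNorm (a r i) ≤ 1) :
    opNorm (∑ i : Fin m, kron (fun r => a r i)) ^ 2 ≤
      m + ∑ i : Fin m, ∑ j ∈ Finset.univ.filter (fun j => i < j), phi a i j := by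
  set A : Fin m → Matrix (∀ r, Fin (d r)) (∀ r, Fin (d r)) ℂ := fun i => kron fun r => a r i
  have hA (i : Fin m) : IsSelfAdjoint (A i) := by
    rw [IsSelfAdjoint, Matrix.star_eq_conjTranspose, kron_conjTranspose]
    exact congrArg kron (funext fun r => ha_sa r i)
  have hdiag (i : Fin m) : ‖A i‖ ^ 2 ≤ 1 :=
    pow_le_one₀ (norm_nonneg _) ((norm_kron_le _).trans
      (prod_le_one (fun _ _ => norm_nonneg _) fun r _ => ha_norm r i))
  have hpair (i j : Fin m) : ‖A i * A j + A j * A i‖ ≤ phi a i j := by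
    rw [kron_mul, kron_mul]
    exact norm_kron_add_kron_le _ _
  calc opNorm (∑ i, A i) ^ 2
      ≤ ∑ i, ‖A i‖ ^ 2 + ∑ i, ∑ j ∈ univ.filter (i < ·), ‖A i * A j + A j * A i‖ :=
        norm_sum_sq_le_of_isSelfAdjoint hA
    _ ≤ m + ∑ i, ∑ j ∈ univ.filter (i < ·), phi a i j :=
      add_le_add ((sum_le_sum fun i _ => hdiag i).trans_eq (by simp))
        (sum_le_sum fun i _ => sum_le_sum fun j _ => hpair i j)

open Parity in
/-- Proposition 2.1: multipartite parity norm bound. -/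
theorem multipartite_parity_norm_bound
    {n m : ℕ} {d : Fin n → ℕ} (hn : 1 ≤ n) (hd : ∀ r, 1 ≤ d r) (hm : 1 ≤ m)
    (a : ∀ r : Fin n, Fin m → Matrix (Fin (d r)) (Fin (d r)) ℂ)
    (ha_sa : ∀ r i, (a r i).IsHermitian)
    (ha_norm : ∀ r i, opNorm (a r i) ≤ 1) :
    opNorm (∑ i : Fin m, kron (fun r => a r i)) ^ 2 ≤
      m + ∑ i : Fin m, ∑ j ∈ Finset.univ.filter (fun j => i < j), phi a i j :=
  multipartite_parity_norm_bound_general a ha_sa ha_norm
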